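/- arXiv:1303.2952 — 2 statements merged into one kernel-verified Lean document; each statement's English description precedes it below -/
import Mathlib

section
/- Let α > 0 and let H be a finite simple graph whose vertex set is partitioned as V_T ∪ V_A such that: (i) the induced subgraph of H on V_T is a tree; letting L be the set of leaves of this tree (vertices of degree 1 in the tree) and I = V_T \ L, every vertex of I has degree at least 3 in the tree, except at most one vertex which has degree 2; (ii) the induced subgraph of H on V_A has maximum degree at most 3 and edge expansion at least α; (iii) the set of edges of H with one endpoint in V_T and the other in V_A forms a perfect matching between L and V_A (in particular |L| = |V_A|), and H has no other edges. Then the edge expansion of H is at least 0.01·α. -/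
/-!
Let `S` have at most half the vertices and let `S'` be whichever of `S`, `Sᶜ` contains at most
half of `VA`; `S'` has the same edge boundary `x` as `S` and at least as many vertices.
The expander gives `α |S' ∩ VA| ≤ x`. On the tree side, `T = S' ∩ VT` spans a forest, so
`T` has fewer than `|T|` internal edges; comparing with the degree sum over `T` (leaves have
degree `1`, all other vertices degree `≥ 3` up to one exception) shows that the non-leaves of
`T` are at most its leaves plus its tree-boundary edges. Each leaf of `T` is matched either into
`S' ∩ VA` or across the boundary, whence `|T| ≤ 2x + 2 |S' ∩ VA|`. A single vertex of `VA`
shows `α ≤ 3` (the tree has two leaves, so `|VA| ≥ 2`), and altogether `α |S| ≤ 9x`.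
-/

open Finset

section

variable {ι : Type*} [DecidableEq ι]

theorem Finset.three_mul_card_le_sum_add_one (s : Finset ι) (d : ι → ℕ) (i₀ : ι)
    (h : ∀ i ∈ s, 3 ≤ d i + if i = i₀ then 1 else 0) : 3 * #s ≤ ∑ i ∈ s, d i + 1 :=
  calc 3 * #s = ∑ _ ∈ s, 3 := by rw [sum_const, smul_eq_mul, mul_comm]
    _ ≤ ∑ i ∈ s, (d i + if i = i₀ then 1 else 0) := sum_le_sum h
    _ = ∑ i ∈ s, d i + if i₀ ∈ s then 1 else 0 := by rw [sum_add_distrib, sum_ite_eq']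
    _ ≤ ∑ i ∈ s, d i + 1 := by gcongr; split_ifs <;> simp

theorem Set.exists_forall_three_le_add_ite [Nonempty ι] {I : Set ι} {d : ι → ℕ}
    (h : (∀ i ∈ I, 3 ≤ d i) ∨ ∃ i₀ ∈ I, d i₀ = 2 ∧ ∀ i ∈ I, i ≠ i₀ → 3 ≤ d i) :
    ∃ i₀, ∀ i ∈ I, 3 ≤ d i + if i = i₀ then 1 else 0 := by
  rcases h with hall | ⟨i₀, -, hi₀, hrest⟩
  · exact ⟨Classical.arbitrary ι, fun i hi => (hall i hi).trans (Nat.le_add_right _ _)⟩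
  · refine ⟨i₀, fun i hi => ?_⟩
    by_cases hii₀ : i = i₀
    · simp [hii₀, hi₀]
    · simpa [hii₀] using hrest i hi hii₀

end

namespace SimpleGraph

variable {V : Type*} (G : SimpleGraph V)

/-- Ordered pairs: `G.adjPairs S Sᶜ` counts each boundary edge of `S` once, while
`G.adjPairs A A` counts each edge inside `A` twice. -/
def adjPairs (A B : Set V) : Set (V × V) := {e | e.1 ∈ A ∧ e.2 ∈ B ∧ G.Adj e.1 e.2}

def ExpandsOn (U : Set V) (α : ℝ) : Prop :=
  ∀ S ⊆ U, S.Nonempty → 2 * S.ncard ≤ U.ncard → α * S.ncard ≤ (G.adjPairs S (U \ S)).ncard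

variable {G}

lemma adjPairs_mono {A A' B B' : Set V} (hA : A ⊆ A') (hB : B ⊆ B') :
    G.adjPairs A B ⊆ G.adjPairs A' B' :=
  fun _ ⟨ha, hb, hab⟩ => ⟨hA ha, hB hb, hab⟩

lemma ncard_adjPairs_comm (A B : Set V) : (G.adjPairs A B).ncard = (G.adjPairs B A).ncard := by
  have : Prod.swap '' G.adjPairs A B = G.adjPairs B A := by
    ext ⟨a, b⟩
    simp [adjPairs, G.adj_comm, and_left_comm]
  rw [← this, Set.ncard_image_of_injective _ Prod.swap_injective]

lemma ncard_adjPairs_union_right [Finite V] {B C : Set V} (A : Set V) (h : Disjoint B C) :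
    (G.adjPairs A (B ∪ C)).ncard = (G.adjPairs A B).ncard + (G.adjPairs A C).ncard := by
  rw [← Set.ncard_union_eq]
  · congr 1
    ext
    simp only [adjPairs, Set.mem_union, Set.mem_ofPred_eq]
    tauto
  · exact Set.disjoint_left.2 fun e he he' => h.ne_of_mem he.2.1 he'.2.1 rfl

lemma ncard_adjPairs_eq_sum [Fintype V] (A B : Set V) [DecidablePred (· ∈ A)] :
    (G.adjPairs A B).ncard = ∑ v ∈ A.toFinset, (B ∩ G.neighborSet v).ncard := by
  classical
  simp only [Set.ncard_eq_toFinset_card', Set.toFinset_card, Fintype.card_subtype,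
    Finset.card_filter, Fintype.sum_prod_type]
  rw [← Finset.sum_subset (subset_univ A.toFinset)]
  · refine sum_congr rfl fun x hx => sum_congr rfl fun y _ => ?_
    simp [adjPairs, Set.mem_toFinset.1 hx]
  · intro x _ hx
    simp [adjPairs, Set.mem_toFinset.not.1 hx]

lemma ncard_adjPairs_self (A : Set V) : (G.adjPairs A A).ncard = Nat.card (G.induce A).Dart := by
  rw [← Set.ncard_univ, ← Set.ncard_image_of_injective _
    (f := fun d : (G.induce A).Dart => ((d.fst : V), (d.snd : V))) ?_]
  · congr 1
    ext ⟨a, b⟩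
    constructor
    · rintro ⟨ha, hb, hab⟩
      exact ⟨⟨(⟨a, ha⟩, ⟨b, hb⟩), hab⟩, trivial, rfl⟩
    · rintro ⟨d, -, h⟩
      cases h
      exact ⟨d.fst.2, d.snd.2, d.adj⟩
  · intro d d' h
    simp only [Prod.mk.injEq] at h
    exact Dart.ext _ _ (Prod.ext (Subtype.ext h.1) (Subtype.ext h.2))

lemma IsAcyclic.card_dart_add_two_le [Fintype V] [Nonempty V] [DecidableRel G.Adj]
    (hG : G.IsAcyclic) : Fintype.card G.Dart + 2 ≤ 2 * Fintype.card V := by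
  classical
  obtain ⟨F, hGF, -, hF⟩ := connected_top.exists_isTree_le_of_le_of_isAcyclic le_top hG
  have := card_le_card (edgeFinset_mono hGF)
  have := hF.card_edgeFinset
  rw [dart_card_eq_twice_card_edges]
  omega

lemma ncard_adjPairs_self_add_two_le [Finite V] {A : Set V} (hA : (G.induce A).IsAcyclic)
    (hne : A.Nonempty) : (G.adjPairs A A).ncard + 2 ≤ 2 * A.ncard := by
  have := Fintype.ofFinite V
  classical
  have := hne.to_subtype
  rw [ncard_adjPairs_self, Nat.card_eq_fintype_card, ← Nat.card_coe_set_eq,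
    Nat.card_eq_fintype_card]
  exact hA.card_dart_add_two_le

lemma ncard_inter_le_add_ncard_adjPairs [Finite V] {A B : Set V} {m : V → V}
    (hinj : Set.InjOn m A) (hmaps : Set.MapsTo m A B) (hadj : ∀ a ∈ A, G.Adj a (m a))
    (S : Set V) : (S ∩ A).ncard ≤ (S ∩ B).ncard + (G.adjPairs (S ∩ A) (B \ S)).ncard := by
  rw [← Set.ncard_inter_add_ncard_sdiff_eq_ncard (S ∩ A) (m ⁻¹' S)]
  refine add_le_add ?_ ?_
  · exact Set.ncard_le_ncard_of_injOn m (fun a ha => ⟨ha.2, hmaps ha.1.2⟩)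
      (hinj.mono fun a ha => ha.1.2)
  · exact Set.ncard_le_ncard_of_injOn (fun a => (a, m a))
      (fun a ha => ⟨ha.1, ⟨hmaps ha.1.2, ha.2⟩, hadj a ha.1.2⟩)
      (fun a _ b _ h => congrArg Prod.fst h)

section Tree

variable [Fintype V] [DecidableEq V] {VT L : Set V}

theorem ncard_diff_add_one_le_of_isTree (htree : (G.induce VT).IsTree)
    (hleaf : ∀ v ∈ L, 1 ≤ (VT ∩ G.neighborSet v).ncard) (v₀ : V)
    (hint : ∀ v ∈ VT \ L, 3 ≤ (VT ∩ G.neighborSet v).ncard + if v = v₀ then 1 else 0)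
    {T : Set V} (hTV : T ⊆ VT) (hT : T.Nonempty) :
    (T \ L).ncard + 1 ≤ (T ∩ L).ncard + (G.adjPairs T (VT \ T)).ncard := by
  classical
  have hsum := ncard_adjPairs_eq_sum (G := G) T VT
  rw [← Set.union_sdiff_cancel hTV, ncard_adjPairs_union_right _ Set.disjoint_sdiff_right,
    Set.union_sdiff_cancel hTV, ← Set.inter_union_sdiff T L, Set.toFinset_union,
    sum_union (Set.disjoint_toFinset.2 Set.disjoint_sdiff_inter.symm),
    Set.inter_union_sdiff] at hsum
  have hacyclic : (G.induce T).IsAcyclic :=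
    htree.isAcyclic.comap (G.induceHomOfLE hTV).toHom (G.induceHomOfLE hTV).injective
  have hedges := ncard_adjPairs_self_add_two_le hacyclic hT
  have hleaves : (T ∩ L).ncard ≤ ∑ v ∈ (T ∩ L).toFinset, (VT ∩ G.neighborSet v).ncard := by
    simpa [Set.ncard_eq_toFinset_card'] using
      card_nsmul_le_sum (T ∩ L).toFinset _ 1 fun v hv => hleaf v (Set.mem_toFinset.1 hv).2
  have hinternal := three_mul_card_le_sum_add_one (T \ L).toFinset
    (fun v => (VT ∩ G.neighborSet v).ncard) v₀
    fun v hv => hint v ⟨hTV (Set.mem_toFinset.1 hv).1, (Set.mem_toFinset.1 hv).2⟩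
  rw [← Set.ncard_eq_toFinset_card'] at hinternal
  have hcard := Set.ncard_inter_add_ncard_sdiff_eq_ncard T L
  omega

theorem two_le_ncard_inter_of_isTree (htree : (G.induce VT).IsTree)
    (hleaf : ∀ v ∈ L, 1 ≤ (VT ∩ G.neighborSet v).ncard) (v₀ : V)
    (hint : ∀ v ∈ VT \ L, 3 ≤ (VT ∩ G.neighborSet v).ncard + if v = v₀ then 1 else 0) :
    2 ≤ (VT ∩ L).ncard := by
  have hVT : VT.Nonempty := Set.nonempty_coe_sort.1 htree.connected.nonempty
  have hcount := ncard_diff_add_one_le_of_isTree htree hleaf v₀ hint subset_rfl hVT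
  have hnone : G.adjPairs VT (VT \ VT) = ∅ := by simp [adjPairs]
  rw [hnone, Set.ncard_empty] at hcount
  obtain ⟨v, hvVT, hvL⟩ : (VT ∩ L).Nonempty := Set.nonempty_of_ncard_ne_zero (by omega)
  obtain ⟨u, huVT, hvu⟩ : (VT ∩ G.neighborSet v).Nonempty :=
    Set.nonempty_of_ncard_ne_zero (by have := hleaf v hvL; omega)
  by_cases huL : u ∈ L
  · calc 2 = ({v, u} : Set V).ncard := (Set.ncard_pair (G.ne_of_adj hvu)).symm
      _ ≤ (VT ∩ L).ncard :=
        Set.ncard_le_ncard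
          (Set.insert_subset ⟨hvVT, hvL⟩ (Set.singleton_subset_iff.2 ⟨huVT, huL⟩))
  · have := (show (VT \ L).Nonempty from ⟨u, huVT, huL⟩).ncard_pos
    omega

theorem ncard_inter_le_of_isTree_of_matching {VA : Set V} (hdisj : Disjoint VT VA)
    (htree : (G.induce VT).IsTree) (hleaf : ∀ v ∈ L, 1 ≤ (VT ∩ G.neighborSet v).ncard) (v₀ : V)
    (hint : ∀ v ∈ VT \ L, 3 ≤ (VT ∩ G.neighborSet v).ncard + if v = v₀ then 1 else 0)
    {m : V → V} (hinj : Set.InjOn m L) (hmaps : Set.MapsTo m L VA)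
    (hadj : ∀ u ∈ L, G.Adj u (m u)) (S : Set V) :
    (S ∩ VT).ncard ≤ 2 * (G.adjPairs S Sᶜ).ncard + 2 * (S ∩ VA).ncard := by
  rcases (S ∩ VT).eq_empty_or_nonempty with hT | hT
  · simp [hT]
  have htreeBound :=
    ncard_diff_add_one_le_of_isTree htree hleaf v₀ hint Set.inter_subset_right hT
  rw [Set.sdiff_inter_self_eq_sdiff] at htreeBound
  have hmatch := ncard_inter_le_add_ncard_adjPairs hinj hmaps hadj S
  have hleaves : (S ∩ VT ∩ L).ncard ≤ (S ∩ L).ncard :=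
    Set.ncard_le_ncard fun v hv => ⟨hv.1.1, hv.2⟩
  have hboundary : (G.adjPairs (S ∩ VT) (VT \ S)).ncard + (G.adjPairs (S ∩ L) (VA \ S)).ncard
      ≤ (G.adjPairs S Sᶜ).ncard :=
    calc _ ≤ (G.adjPairs S (VT \ S)).ncard + (G.adjPairs S (VA \ S)).ncard :=
          add_le_add (Set.ncard_le_ncard (adjPairs_mono Set.inter_subset_left subset_rfl))
            (Set.ncard_le_ncard (adjPairs_mono Set.inter_subset_left subset_rfl))
      _ = (G.adjPairs S (VT \ S ∪ VA \ S)).ncard :=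
          (ncard_adjPairs_union_right S (hdisj.mono Set.sdiff_subset Set.sdiff_subset)).symm
      _ ≤ (G.adjPairs S Sᶜ).ncard :=
          Set.ncard_le_ncard (adjPairs_mono subset_rfl fun v hv => hv.elim (·.2) (·.2))
  have hcard := Set.ncard_inter_add_ncard_sdiff_eq_ncard (S ∩ VT) L
  omega

end Tree

theorem ExpandsOn.le_of_degree_le [Finite V] {U : Set V} {α : ℝ} {D : ℕ}
    (hexp : G.ExpandsOn U α) (hdeg : ∀ v ∈ U, (U ∩ G.neighborSet v).ncard ≤ D) (hU : 2 ≤ U.ncard) : α ≤ D := by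
  obtain ⟨v, hv⟩ : U.Nonempty := Set.nonempty_of_ncard_ne_zero (by omega)
  have h := hexp {v} (Set.singleton_subset_iff.2 hv) (Set.singleton_nonempty v)
    (by rw [Set.ncard_singleton]; omega)
  rw [Set.ncard_singleton, Nat.cast_one, mul_one] at h
  have hpairs : (G.adjPairs {v} (U \ {v})).ncard ≤ (U ∩ G.neighborSet v).ncard :=
    Set.ncard_le_ncard_of_injOn Prod.snd
      (fun e ⟨he1, he2, hadj⟩ => ⟨he2.1, (Set.mem_singleton_iff.1 he1) ▸ hadj⟩)
      (fun e ⟨he1, _⟩ e' ⟨he1', _⟩ h =>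
        Prod.ext ((Set.mem_singleton_iff.1 he1).trans (Set.mem_singleton_iff.1 he1').symm) h)
  exact h.trans (by exact_mod_cast hpairs.trans (hdeg v hv))

theorem ExpandsOn.mul_ncard_inter_le [Finite V] {U : Set V} {α : ℝ} (hexp : G.ExpandsOn U α)
    {S : Set V} (hS : 2 * (S ∩ U).ncard ≤ U.ncard) :
    α * (S ∩ U).ncard ≤ (G.adjPairs S Sᶜ).ncard := by
  rcases (S ∩ U).eq_empty_or_nonempty with hSU | hSU
  · simp [hSU]
  refine (hexp _ Set.inter_subset_right hSU hS).trans ?_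
  exact_mod_cast Set.ncard_le_ncard
    (adjPairs_mono Set.inter_subset_left fun v (hv : v ∈ U \ (S ∩ U)) hvS => hv.2 ⟨hvS, hv.1⟩)

theorem mul_ncard_le_nine_mul_ncard_adjPairs_compl [Fintype V] {U : Set V} {α : ℝ}
    (hα : 0 ≤ α) (hα3 : α ≤ 3)
    (hout : ∀ S : Set V, (S \ U).ncard ≤ 2 * (G.adjPairs S Sᶜ).ncard + 2 * (S ∩ U).ncard)
    (hin : ∀ S : Set V, 2 * (S ∩ U).ncard ≤ U.ncard →
      α * (S ∩ U).ncard ≤ (G.adjPairs S Sᶜ).ncard)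
    {S : Set V} (hS : 2 * S.ncard ≤ Fintype.card V) :
    α * S.ncard ≤ 9 * (G.adjPairs S Sᶜ).ncard := by
  suffices key : ∀ S' : Set V, S.ncard ≤ S'.ncard →
      (G.adjPairs S' S'ᶜ).ncard = (G.adjPairs S Sᶜ).ncard → 2 * (S' ∩ U).ncard ≤ U.ncard →
      α * S.ncard ≤ 9 * (G.adjPairs S Sᶜ).ncard by
    by_cases hhalf : 2 * (S ∩ U).ncard ≤ U.ncard
    · exact key S le_rfl rfl hhalf
    refine key Sᶜ ?_ (by rw [compl_compl, ncard_adjPairs_comm]) ?_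
    · have := Set.ncard_add_ncard_compl S
      rw [Nat.card_eq_fintype_card] at this
      omega
    · have := Set.ncard_inter_add_ncard_sdiff_eq_ncard U S
      rw [Set.inter_comm, ← Set.sdiff_eq]
      rw [Set.inter_comm] at this
      omega
  intro S' hSS' hx hhalf
  have hsplit := Set.ncard_inter_add_ncard_sdiff_eq_ncard S' U
  have hT : ((S' \ U).ncard : ℝ) ≤ 2 * (G.adjPairs S Sᶜ).ncard + 2 * (S' ∩ U).ncard := by
    exact_mod_cast hx ▸ hout S'
  have hA := hx ▸ hin S' hhalf
  have hS' : (S.ncard : ℝ) ≤ (S' ∩ U).ncard + (S' \ U).ncard := by exact_mod_cast hsplit ▸ hSS'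
  have hx0 : (0 : ℝ) ≤ (G.adjPairs S Sᶜ).ncard := Nat.cast_nonneg _
  nlinarith

end SimpleGraph

open SimpleGraph

theorem tree_matching_expander_is_expander_general {V : Type*} [Fintype V]
    (H : SimpleGraph V) (α : ℝ) (hα : 0 < α)
    (VT VA : Set V) (hpart : VT ∪ VA = Set.univ) (hdisj : Disjoint VT VA)
    -- (i) the induced subgraph on `VT` is a tree
    (htree : (H.induce VT).IsTree)
    -- `L` = leaves of the tree, `I` = internal vertices of the tree
    (L I : Set V)
    (hL : L = {v | v ∈ VT ∧ Set.ncard {u | u ∈ VT ∧ H.Adj v u} = 1})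
    (hI : I = VT \ L)
    -- every internal vertex has tree-degree ≥ 3, except at most one of degree 2
    (hdeg : (∀ v ∈ I, 3 ≤ Set.ncard {u | u ∈ VT ∧ H.Adj v u}) ∨
      (∃ v₀ ∈ I, Set.ncard {u | u ∈ VT ∧ H.Adj v₀ u} = 2 ∧
        ∀ v ∈ I, v ≠ v₀ → 3 ≤ Set.ncard {u | u ∈ VT ∧ H.Adj v u}))
    -- (ii) the induced subgraph on `VA` has maximum degree at most 3 ...
    (hAdeg : ∀ v ∈ VA, Set.ncard {u | u ∈ VA ∧ H.Adj v u} ≤ 3)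
    -- ... and edge expansion at least `α`
    (hAexp : ∀ S : Set V, S ⊆ VA → S.Nonempty → 2 * S.ncard ≤ VA.ncard →
      α * (S.ncard : ℝ) ≤
        (Set.ncard {e : V × V | e.1 ∈ S ∧ e.2 ∈ VA \ S ∧ H.Adj e.1 e.2} : ℝ))
    -- (iii) the cross edges form a perfect matching between `L` and `VA`
    (hmatch1 : ∀ u ∈ L, ∃! w, w ∈ VA ∧ H.Adj u w)
    (hmatch2 : ∀ w ∈ VA, ∃! u, u ∈ L ∧ H.Adj u w) :
    -- conclusion: `H` has edge expansion at least `0.01·α`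
    ∀ S : Set V, S.Nonempty → 2 * S.ncard ≤ Fintype.card V →
      0.01 * α * (S.ncard : ℝ) ≤
        (Set.ncard {e : V × V | e.1 ∈ S ∧ e.2 ∉ S ∧ H.Adj e.1 e.2} : ℝ) := by
  classical
  intro S hS hSV
  have : Nonempty V := ⟨hS.some⟩
  subst hI
  have hVT : VT = VAᶜ := (isCompl_iff.2 ⟨hdisj, codisjoint_iff.2 hpart⟩).eq_compl
  have hleaf : ∀ v ∈ L, 1 ≤ (VT ∩ H.neighborSet v).ncard := fun v hv => by
    rw [hL] at hv
    exact hv.2.ge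
  obtain ⟨v₀, hint⟩ := Set.exists_forall_three_le_add_ite
    (d := fun v => Set.ncard {u | u ∈ VT ∧ H.Adj v u}) hdeg
  choose! m hmVA hmadj using fun u hu => (hmatch1 u hu).exists
  have hinj : Set.InjOn m L := fun u hu u' hu' h =>
    (hmatch2 _ (hmVA u hu)).unique ⟨hu, hmadj u hu⟩ ⟨hu', h ▸ hmadj u' hu'⟩
  have hα3 : α ≤ 3 := ExpandsOn.le_of_degree_le hAexp hAdeg <|
    calc 2 ≤ (VT ∩ L).ncard := two_le_ncard_inter_of_isTree htree hleaf v₀ hint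
      _ ≤ L.ncard := Set.ncard_le_ncard Set.inter_subset_right
      _ ≤ VA.ncard := Set.ncard_le_ncard_of_injOn m hmVA hinj
  have key := mul_ncard_le_nine_mul_ncard_adjPairs_compl hα.le hα3
    (fun S => by
      simpa only [hVT, ← Set.sdiff_eq] using
        ncard_inter_le_of_isTree_of_matching hdisj htree hleaf v₀ hint hinj hmVA hmadj S)
    (fun _ => ExpandsOn.mul_ncard_inter_le hAexp) hSV
  have hS0 : (0 : ℝ) ≤ S.ncard := Nat.cast_nonneg _
  change 0.01 * α * (S.ncard : ℝ) ≤ (H.adjPairs S Sᶜ).ncard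
  nlinarith

/-- The tree-plus-matching-plus-expander graph is an expander: if the vertex set of
`H` is partitioned into `VT ∪ VA` where (i) `H` induces a tree on `VT` whose internal
vertices all have degree at least 3 except at most one of degree 2, (ii) `H` induces
on `VA` a graph of maximum degree at most 3 and edge expansion at least `α`, and
(iii) the cross edges form a perfect matching between the leaves `L` of the tree and
`VA` (and there are no other edges), then `H` has edge expansion at least `0.01·α`. -/
theorem tree_matching_expander_is_expander {V : Type*} [Fintype V]
    (H : SimpleGraph V) (α : ℝ) (hα : 0 < α)
    (VT VA : Set V) (hpart : VT ∪ VA = Set.univ) (hdisj : Disjoint VT VA)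
    -- (i) the induced subgraph on `VT` is a tree
    (htree : (H.induce VT).IsTree)
    -- `L` = leaves of the tree, `I` = internal vertices of the tree
    (L I : Set V)
    (hL : L = {v | v ∈ VT ∧ Set.ncard {u | u ∈ VT ∧ H.Adj v u} = 1})
    (hI : I = VT \ L)
    -- every internal vertex has tree-degree ≥ 3, except at most one of degree 2
    (hdeg : (∀ v ∈ I, 3 ≤ Set.ncard {u | u ∈ VT ∧ H.Adj v u}) ∨
      (∃ v₀ ∈ I, Set.ncard {u | u ∈ VT ∧ H.Adj v₀ u} = 2 ∧
        ∀ v ∈ I, v ≠ v₀ → 3 ≤ Set.ncard {u | u ∈ VT ∧ H.Adj v u}))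
    -- (ii) the induced subgraph on `VA` has maximum degree at most 3 ...
    (hAdeg : ∀ v ∈ VA, Set.ncard {u | u ∈ VA ∧ H.Adj v u} ≤ 3)
    -- ... and edge expansion at least `α`
    (hAexp : ∀ S : Set V, S ⊆ VA → S.Nonempty → 2 * S.ncard ≤ VA.ncard →
      α * (S.ncard : ℝ) ≤
        (Set.ncard {e : V × V | e.1 ∈ S ∧ e.2 ∈ VA \ S ∧ H.Adj e.1 e.2} : ℝ))
    -- (iii) the cross edges form a perfect matching between `L` and `VA`
    (hcross : ∀ u ∈ VT, ∀ w ∈ VA, H.Adj u w → u ∈ L)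
    (hmatch1 : ∀ u ∈ L, ∃! w, w ∈ VA ∧ H.Adj u w)
    (hmatch2 : ∀ w ∈ VA, ∃! u, u ∈ L ∧ H.Adj u w) :
    -- conclusion: `H` has edge expansion at least `0.01·α`
    ∀ S : Set V, S.Nonempty → 2 * S.ncard ≤ Fintype.card V →
      0.01 * α * (S.ncard : ℝ) ≤
        (Set.ncard {e : V × V | e.1 ∈ S ∧ e.2 ∉ S ∧ H.Adj e.1 e.2} : ℝ) :=
  tree_matching_expander_is_expander_general H α hα VT VA hpart hdisj htree L I hL hI hdeg hAdeg
    hAexp hmatch1 hmatch2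
end

section
/- Let A, B, C be random variables on a probability space, each taking finitely many values. Then H(C) ≤ H(C|A) + H(C|B) + I(A;B). -/
open MeasureTheory

/-- Shannon entropy of a finitely-valued random variable `A` on `(Ω, μ)`:
`H(A) = -∑ₐ P(A = a) log P(A = a)`. -/
noncomputable def entropy {Ω : Type*} [MeasurableSpace Ω] (μ : Measure Ω)
    {α : Type*} [Fintype α] (A : Ω → α) : ℝ :=
  ∑ a : α, Real.negMulLog (μ (A ⁻¹' {a})).toReal

/-- Conditional entropy `H(C|A) = H(C,A) - H(A)`. -/
noncomputable def condEntropy {Ω : Type*} [MeasurableSpace Ω] (μ : Measure Ω)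
    {α γ : Type*} [Fintype α] [Fintype γ] (C : Ω → γ) (A : Ω → α) : ℝ :=
  entropy μ (fun ω => (C ω, A ω)) - entropy μ A

/-- Mutual information `I(A;B) = H(A) + H(B) - H(A,B)`. -/
noncomputable def mutualInfo {Ω : Type*} [MeasurableSpace Ω] (μ : Measure Ω)
    {α β : Type*} [Fintype α] [Fintype β] (A : Ω → α) (B : Ω → β) : ℝ :=
  entropy μ A + entropy μ B - entropy μ (fun ω => (A ω, B ω))


lemma real_key {α β γ : Type*} [Fintype α] [Fintype β] [Fintype γ]
    (p : α → β → γ → ℝ) (hp : ∀ a b c, 0 ≤ p a b c) :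
    ∑ c, Real.negMulLog (∑ a, ∑ b, p a b c) + ∑ a, ∑ b, Real.negMulLog (∑ c, p a b c) ≤
    ∑ c, ∑ a, Real.negMulLog (∑ b, p a b c) + ∑ c, ∑ b, Real.negMulLog (∑ a, p a b c) := by
  classical
  set pC : γ → ℝ := fun c => ∑ a, ∑ b, p a b c with hpC
  set pAB : α → β → ℝ := fun a b => ∑ c, p a b c with hpAB
  set pCA : γ → α → ℝ := fun c a => ∑ b, p a b c with hpCA
  set pCB : γ → β → ℝ := fun c b => ∑ a, p a b c with hpCB
  have hpC0 : ∀ c, 0 ≤ pC c := fun c => Finset.sum_nonneg fun a _ =>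
    Finset.sum_nonneg fun b _ => hp a b c
  have hpCA0 : ∀ c a, 0 ≤ pCA c a := fun c a => Finset.sum_nonneg fun b _ => hp a b c
  have hpCB0 : ∀ c b, 0 ≤ pCB c b := fun c b => Finset.sum_nonneg fun a _ => hp a b c
  have hle_pC : ∀ a b c, p a b c ≤ pC c := by
    intro a b c
    calc p a b c ≤ ∑ b, p a b c := Finset.single_le_sum (fun b _ => hp a b c) (Finset.mem_univ b)
    _ ≤ ∑ a, ∑ b, p a b c := Finset.single_le_sum
        (fun a _ => Finset.sum_nonneg fun b _ => hp a b c) (Finset.mem_univ a)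
  have hle_pAB : ∀ a b c, p a b c ≤ pAB a b := fun a b c =>
    Finset.single_le_sum (fun c _ => hp a b c) (Finset.mem_univ c)
  have hle_pCA : ∀ a b c, p a b c ≤ pCA c a := fun a b c =>
    Finset.single_le_sum (fun b _ => hp a b c) (Finset.mem_univ b)
  have hle_pCB : ∀ a b c, p a b c ≤ pCB c b := fun a b c =>
    Finset.single_le_sum (fun a _ => hp a b c) (Finset.mem_univ a)
  set F : α → β → γ → ℝ := fun a b c =>
    p a b c * (Real.log (pC c) + Real.log (pAB a b)
      - Real.log (pCA c a) - Real.log (pCB c b)) with hF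
  set g : α → β → γ → ℝ := fun a b c =>
    if pC c = 0 then 0 else pCA c a * pCB c b / pC c with hg
  -- pointwise bound
  have key : ∀ a b c, p a b c - g a b c ≤ F a b c := by
    intro a b c
    rcases eq_or_lt_of_le (hp a b c) with h | h
    · have hg0 : 0 ≤ g a b c := by
        simp only [hg]
        split
        · exact le_rfl
        · exact div_nonneg (mul_nonneg (hpCA0 c a) (hpCB0 c b)) (hpC0 c)
      simp only [hF, ← h, zero_mul, zero_sub]
      linarith
    · have hpCpos : 0 < pC c := lt_of_lt_of_le h (hle_pC a b c)
      have hpABpos : 0 < pAB a b := lt_of_lt_of_le h (hle_pAB a b c)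
      have hpCApos : 0 < pCA c a := lt_of_lt_of_le h (hle_pCA a b c)
      have hpCBpos : 0 < pCB c b := lt_of_lt_of_le h (hle_pCB a b c)
      have hgv : g a b c = pCA c a * pCB c b / pC c := by
        simp only [hg, if_neg hpCpos.ne']
      set r : ℝ := pCA c a * pCB c b / (pC c * pAB a b) with hr
      have hrpos : 0 < r := by positivity
      have hlog : Real.log r ≤ r - 1 := Real.log_le_sub_one_of_pos hrpos
      have hlogr : Real.log r = Real.log (pCA c a) + Real.log (pCB c b)
          - Real.log (pC c) - Real.log (pAB a b) := by
        rw [hr, Real.log_div (by positivity) (by positivity),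
          Real.log_mul hpCApos.ne' hpCBpos.ne', Real.log_mul hpCpos.ne' hpABpos.ne']
        ring
      have hFval : F a b c = p a b c * (-(Real.log r)) := by
        simp only [hF]; rw [hlogr]; ring
      have h1 : p a b c * (1 - r) ≤ p a b c * (-(Real.log r)) := by
        apply mul_le_mul_of_nonneg_left _ (hp a b c)
        linarith
      have h2 : p a b c * r ≤ g a b c := by
        have e : p a b c * r = (p a b c / pAB a b) * (pCA c a * pCB c b / pC c) := by
          rw [hr]; field_simp
        rw [hgv, e]
        exact mul_le_of_le_one_left (by positivity)
          ((div_le_one hpABpos).mpr (hle_pAB a b c))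
      rw [hFval]
      nlinarith
  -- sum of g equals sum of pC
  have hsum_g : ∑ c, ∑ a, ∑ b, g a b c = ∑ c, pC c := by
    refine Finset.sum_congr rfl fun c _ => ?_
    by_cases hc : pC c = 0
    · simp [hg, hc]
    · have e0 : ∑ a, ∑ b, g a b c = (∑ a, pCA c a) * (∑ b, pCB c b) / pC c := by
        simp only [hg, if_neg hc]
        rw [Finset.sum_mul_sum, Finset.sum_div]
        exact Finset.sum_congr rfl fun a _ => by rw [Finset.sum_div]
      have e1 : (∑ a, pCA c a) = pC c := rfl
      have e2 : (∑ b, pCB c b) = pC c := by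
        simp only [hpCB, hpC]; exact Finset.sum_comm
      rw [e0, e1, e2, mul_div_assoc, div_self hc, mul_one]
  -- sum of F is nonneg
  have hFnn : 0 ≤ ∑ c, ∑ a, ∑ b, F a b c := by
    have h1 : ∑ c, ∑ a, ∑ b, (p a b c - g a b c) ≤ ∑ c, ∑ a, ∑ b, F a b c :=
      Finset.sum_le_sum fun c _ => Finset.sum_le_sum fun a _ =>
        Finset.sum_le_sum fun b _ => key a b c
    have h2 : ∑ c, ∑ a, ∑ b, (p a b c - g a b c) = 0 := by
      simp only [Finset.sum_sub_distrib]
      rw [hsum_g]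
      simp [hpC]
    linarith
  -- expansions
  have comm3 : ∀ (f : α → β → γ → ℝ), ∑ a, ∑ b, ∑ c, f a b c = ∑ c, ∑ a, ∑ b, f a b c := by
    intro f
    have h : ∑ a, ∑ b, ∑ c, f a b c = ∑ a, ∑ c, ∑ b, f a b c :=
      Finset.sum_congr rfl fun a _ => Finset.sum_comm
    rw [h, Finset.sum_comm]
  have E1 : ∑ c, Real.negMulLog (pC c) = -∑ c, ∑ a, ∑ b, p a b c * Real.log (pC c) := by
    simp only [Real.negMulLog, hpC, neg_mul, Finset.sum_mul, Finset.sum_neg_distrib]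
  have E2 : ∑ a, ∑ b, Real.negMulLog (pAB a b)
      = -∑ c, ∑ a, ∑ b, p a b c * Real.log (pAB a b) := by
    rw [← comm3]
    simp only [Real.negMulLog, hpAB, neg_mul, Finset.sum_mul, Finset.sum_neg_distrib]
  have E3 : ∑ c, ∑ a, Real.negMulLog (pCA c a)
      = -∑ c, ∑ a, ∑ b, p a b c * Real.log (pCA c a) := by
    simp only [Real.negMulLog, hpCA, neg_mul, Finset.sum_mul, Finset.sum_neg_distrib]
  have E4 : ∑ c, ∑ b, Real.negMulLog (pCB c b)
      = -∑ c, ∑ a, ∑ b, p a b c * Real.log (pCB c b) := by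
    have h : ∀ c, ∑ a, ∑ b, p a b c * Real.log (pCB c b)
        = ∑ b, ∑ a, p a b c * Real.log (pCB c b) := fun c => Finset.sum_comm
    simp only [h]
    simp only [Real.negMulLog, hpCB, neg_mul, Finset.sum_mul, Finset.sum_neg_distrib]
  have Ftot : ∑ c, ∑ a, ∑ b, F a b c
      = ∑ c, ∑ a, ∑ b, p a b c * Real.log (pC c)
      + ∑ c, ∑ a, ∑ b, p a b c * Real.log (pAB a b)
      - ∑ c, ∑ a, ∑ b, p a b c * Real.log (pCA c a)
      - ∑ c, ∑ a, ∑ b, p a b c * Real.log (pCB c b) := by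
    simp only [hF, mul_add, mul_sub, Finset.sum_add_distrib, Finset.sum_sub_distrib]
  rw [Ftot] at hFnn
  rw [E1, E2, E3, E4]
  linarith

lemma measure_decomp {Ω : Type*} [MeasurableSpace Ω] (μ : Measure Ω) [IsFiniteMeasure μ]
    {α : Type*} [Fintype α] [MeasurableSpace α] [MeasurableSingletonClass α]
    (A : Ω → α) (hA : Measurable A) {s : Set Ω} (hs : MeasurableSet s) :
    (μ s).toReal = ∑ a, (μ (A ⁻¹' {a} ∩ s)).toReal := by
  rw [← ENNReal.toReal_sum (fun a _ => measure_ne_top μ _)]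
  congr 1
  have hss : s = ⋃ a, A ⁻¹' {a} ∩ s := by ext ω; simp
  have hd : Pairwise (Function.onFun Disjoint fun a => A ⁻¹' {a} ∩ s) := by
    intro a a' haa'
    refine Set.disjoint_left.mpr fun ω h1 h2 => haa' ?_
    have e1 := h1.1; have e2 := h2.1
    simp only [Set.mem_preimage, Set.mem_singleton_iff] at e1 e2
    rw [← e1, ← e2]
  conv_lhs => rw [hss]
  rw [measure_iUnion hd (fun a => (hA (measurableSet_singleton a)).inter hs), tsum_fintype]

/-- For finitely-valued random variables `A`, `B`, `C` on a probability space,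
`H(C) ≤ H(C|A) + H(C|B) + I(A;B)`. -/
theorem entropy_le_condEntropy_add_condEntropy_add_mutualInfo
    {Ω : Type*} [MeasurableSpace Ω] (μ : Measure Ω) [IsProbabilityMeasure μ]
    {α β γ : Type*} [Fintype α] [Fintype β] [Fintype γ]
    [MeasurableSpace α] [MeasurableSingletonClass α]
    [MeasurableSpace β] [MeasurableSingletonClass β]
    [MeasurableSpace γ] [MeasurableSingletonClass γ]
    (A : Ω → α) (B : Ω → β) (C : Ω → γ)
    (hA : Measurable A) (hB : Measurable B) (hC : Measurable C) :
    entropy μ C ≤ condEntropy μ C A + condEntropy μ C B + mutualInfo μ A B := by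
  classical
  set p : α → β → γ → ℝ :=
    fun a b c => (μ (A ⁻¹' {a} ∩ (B ⁻¹' {b} ∩ C ⁻¹' {c}))).toReal with hp_def
  have hp : ∀ a b c, 0 ≤ p a b c := fun a b c => ENNReal.toReal_nonneg
  have mA : ∀ a : α, MeasurableSet (A ⁻¹' {a}) := fun a => hA (measurableSet_singleton a)
  have mB : ∀ b : β, MeasurableSet (B ⁻¹' {b}) := fun b => hB (measurableSet_singleton b)
  have mC : ∀ c : γ, MeasurableSet (C ⁻¹' {c}) := fun c => hC (measurableSet_singleton c)
  have μcongr : ∀ s t : Set Ω, s = t → (μ s).toReal = (μ t).toReal := by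
    intro s t h; rw [h]
  -- H(C)
  have HC : entropy μ C = ∑ c, Real.negMulLog (∑ a, ∑ b, p a b c) := by
    refine Finset.sum_congr rfl fun c _ => ?_
    congr 1
    rw [measure_decomp μ A hA (mC c)]
    refine Finset.sum_congr rfl fun a _ => ?_
    rw [measure_decomp μ B hB ((mA a).inter (mC c))]
    refine Finset.sum_congr rfl fun b _ => ?_
    refine μcongr _ _ ?_
    ext ω
    simp only [Set.mem_inter_iff, Set.mem_preimage, Set.mem_singleton_iff]
    tauto
  -- H(A,B)
  have HAB : entropy μ (fun ω => (A ω, B ω)) = ∑ a, ∑ b, Real.negMulLog (∑ c, p a b c) := by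
    rw [entropy, Fintype.sum_prod_type]
    refine Finset.sum_congr rfl fun a _ => Finset.sum_congr rfl fun b _ => ?_
    congr 1
    have hpre : (fun ω => (A ω, B ω)) ⁻¹' {(a, b)} = A ⁻¹' {a} ∩ B ⁻¹' {b} := by
      ext ω
      simp [Prod.ext_iff]
    rw [hpre, measure_decomp μ C hC ((mA a).inter (mB b))]
    refine Finset.sum_congr rfl fun c _ => ?_
    refine μcongr _ _ ?_
    ext ω
    simp only [Set.mem_inter_iff, Set.mem_preimage, Set.mem_singleton_iff]
    tauto
  -- H(C,A)
  have HCA : entropy μ (fun ω => (C ω, A ω))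
      = ∑ c, ∑ a, Real.negMulLog (∑ b, p a b c) := by
    rw [entropy, Fintype.sum_prod_type]
    refine Finset.sum_congr rfl fun c _ => Finset.sum_congr rfl fun a _ => ?_
    congr 1
    have hpre : (fun ω => (C ω, A ω)) ⁻¹' {(c, a)} = C ⁻¹' {c} ∩ A ⁻¹' {a} := by
      ext ω
      simp [Prod.ext_iff]
    rw [hpre, measure_decomp μ B hB ((mC c).inter (mA a))]
    refine Finset.sum_congr rfl fun b _ => ?_
    refine μcongr _ _ ?_
    ext ω
    simp only [Set.mem_inter_iff, Set.mem_preimage, Set.mem_singleton_iff]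
    tauto
  -- H(C,B)
  have HCB : entropy μ (fun ω => (C ω, B ω))
      = ∑ c, ∑ b, Real.negMulLog (∑ a, p a b c) := by
    rw [entropy, Fintype.sum_prod_type]
    refine Finset.sum_congr rfl fun c _ => Finset.sum_congr rfl fun b _ => ?_
    congr 1
    have hpre : (fun ω => (C ω, B ω)) ⁻¹' {(c, b)} = C ⁻¹' {c} ∩ B ⁻¹' {b} := by
      ext ω
      simp [Prod.ext_iff]
    rw [hpre, measure_decomp μ A hA ((mC c).inter (mB b))]
    refine Finset.sum_congr rfl fun a _ => ?_
    refine μcongr _ _ ?_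
    ext ω
    simp only [Set.mem_inter_iff, Set.mem_preimage, Set.mem_singleton_iff]
    tauto
  have key := real_key p hp
  rw [← HC, ← HAB, ← HCA, ← HCB] at key
  simp only [condEntropy, mutualInfo]
  linarith
end
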